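/- Eckart–Young (Frobenius norm): among all matrices of rank at most p, the rank-p SVD truncation X̃ minimizes the Frobenius distance to X: ‖X − X̃‖_F ≤ ‖X − B‖_F for every B with rank(B) ≤ p. -/

import Mathlib

/-!
Let `K` be the range of `B`, a subspace of dimension at most `p`, and `c i = ‖P_K U i‖²`. As
`X V i = σ i U i` and `B V i ∈ K`, we get `‖(X - B) V i‖² ≥ σ i² (1 - c i)`, and Bessel's inequality
for the orthonormal `V i`, applied row by row, gives `∑ i ‖(X - B) V i‖² ≤ ‖X - B‖_F²`. The weights
`c i` lie in `[0, 1]` and, by Bessel's inequality for the `U i`, sum to at most `dim K ≤ p`; since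
the `σ i²` decrease, `∑ i σ i² c i ≤ ∑ i < p, σ i²`. Altogether
`‖X - B‖_F² ≥ ∑ i ≥ p, σ i² = ‖X - X̃‖_F²`.
-/

open Matrix Finset WithLp

theorem sum_mul_le_sum_of_threshold {ι : Type*} [Fintype ι] {s : Finset ι} {τ c : ι → ℝ} {t : ℝ}
    (ht : 0 ≤ t) (hτs : ∀ i ∈ s, t ≤ τ i) (hτsc : ∀ i ∉ s, τ i ≤ t)
    (hc₀ : ∀ i, 0 ≤ c i) (hc₁ : ∀ i, c i ≤ 1) (hc : ∑ i, c i ≤ #s) :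
    ∑ i, τ i * c i ≤ ∑ i ∈ s, τ i := by
  classical
  have hpoint : ∀ i, τ i * c i ≤ t * c i + if i ∈ s then τ i - t else 0 := by
    intro i
    split_ifs with hi
    · nlinarith [hτs i hi, hc₁ i]
    · nlinarith [hτsc i hi, hc₀ i]
  calc ∑ i, τ i * c i ≤ ∑ i, (t * c i + if i ∈ s then τ i - t else 0) :=
        sum_le_sum fun i _ => hpoint i
    _ = t * (∑ i, c i - #s) + ∑ i ∈ s, τ i := by
      rw [sum_add_distrib, ← mul_sum, sum_ite_mem, univ_inter, sum_sub_distrib, sum_const,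
        nsmul_eq_mul]
      ring
    _ ≤ ∑ i ∈ s, τ i := by nlinarith

theorem Antitone.sum_mul_le_sum_filter_val_lt {r : ℕ} (p : ℕ) {τ c : Fin r → ℝ} (hτ : Antitone τ)
    (hτ₀ : ∀ i, 0 ≤ τ i) (hc₀ : ∀ i, 0 ≤ c i) (hc₁ : ∀ i, c i ≤ 1) (hc : ∑ i, c i ≤ p) :
    ∑ i, τ i * c i ≤ ∑ i ∈ univ.filter (fun i : Fin r => (i : ℕ) < p), τ i := by
  by_cases hpr : p < r
  · refine sum_mul_le_sum_of_threshold (t := τ ⟨p, hpr⟩) (hτ₀ _) (fun i hi => hτ ?_)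
      (fun i hi => hτ ?_) hc₀ hc₁ ?_
    · simp only [mem_filter_univ] at hi; exact Fin.le_def.2 hi.le
    · simp only [mem_filter_univ, not_lt] at hi; exact Fin.le_def.2 hi
    · rwa [Fin.card_filter_val_lt, min_eq_right hpr.le]
  · rw [filter_true_of_mem fun i _ => by omega]
    exact sum_le_sum fun i _ => mul_le_of_le_one_right (hτ₀ i) (hc₁ i)

section
variable {𝕜 E : Type*} [RCLike 𝕜] [NormedAddCommGroup E] [InnerProductSpace 𝕜 E]

theorem Submodule.norm_sq_sub_norm_sq_starProjection_le (K : Submodule 𝕜 E)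
    [K.HasOrthogonalProjection] (x : E) {w : E} (hw : w ∈ K) :
    ‖x‖ ^ 2 - ‖K.starProjection x‖ ^ 2 ≤ ‖x - w‖ ^ 2 := by
  have hmin : ‖x - K.starProjection x‖ ≤ ‖x - w‖ := by
    rw [K.starProjection_minimal]
    exact ciInf_le (show BddBelow _ from ⟨0, Set.forall_mem_range.2 fun _ => norm_nonneg _⟩)
      (⟨w, hw⟩ : K)
  have hpyth := K.norm_sq_eq_add_norm_sq_starProjection x
  rw [K.starProjection_orthogonal'] at hpyth
  change ‖x‖ ^ 2 = ‖K.starProjection x‖ ^ 2 + ‖x - K.starProjection x‖ ^ 2 at hpyth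
  nlinarith [norm_nonneg (x - K.starProjection x)]

theorem Orthonormal.sum_norm_sq_starProjection_le_finrank {ι : Type*} [Fintype ι] {u : ι → E}
    (hu : Orthonormal 𝕜 u) (K : Submodule 𝕜 E) [FiniteDimensional 𝕜 K] :
    ∑ i, ‖K.starProjection (u i)‖ ^ 2 ≤ Module.finrank 𝕜 K := by
  set b := stdOrthonormalBasis 𝕜 K
  have hproj : ∀ x, ‖K.starProjection x‖ ^ 2 = ∑ j, ‖inner 𝕜 (b j : E) x‖ ^ 2 := fun x => by
    rw [K.starProjection_apply, Submodule.norm_coe, ← b.sum_sq_norm_inner_right]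
    simp
  calc ∑ i, ‖K.starProjection (u i)‖ ^ 2 = ∑ j, ∑ i, ‖inner 𝕜 (u i) (b j : E)‖ ^ 2 := by
        simp_rw [hproj, ← norm_inner_symm (u _)]
        exact sum_comm
    _ ≤ ∑ j, ‖(b j : E)‖ ^ 2 := sum_le_sum fun j _ => hu.sum_inner_products_le _
    _ = Module.finrank 𝕜 K := by simp only [Submodule.norm_coe, b.orthonormal.norm_eq_one]; simp
end

theorem Submodule.sq_mul_one_sub_norm_sq_starProjection_le {E : Type*} [NormedAddCommGroup E]
    [InnerProductSpace ℝ E] (K : Submodule ℝ E) [K.HasOrthogonalProjection] {u w : E}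
    (hu : ‖u‖ = 1) (a : ℝ) (hw : w ∈ K) :
    a ^ 2 * (1 - ‖K.starProjection u‖ ^ 2) ≤ ‖a • u - w‖ ^ 2 := by
  have := K.norm_sq_sub_norm_sq_starProjection_le (a • u) hw
  rw [map_smul, norm_smul, norm_smul, hu, Real.norm_eq_abs] at this
  nlinarith [sq_abs a]

theorem EuclideanSpace.orthonormal_toLp_iff {ι n : Type*} [Fintype n] [DecidableEq ι]
    {f : ι → n → ℝ} :
    Orthonormal ℝ (fun i => toLp 2 (f i)) ↔
      ∀ i j, ∑ a, f i a * f j a = if i = j then 1 else 0 := by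
  simp only [orthonormal_iff_ite, EuclideanSpace.inner_toLp_toLp, dotProduct, star_trivial,
    mul_comm]

theorem EuclideanSpace.norm_sq_toLp {n : Type*} [Fintype n] (x : n → ℝ) :
    ‖toLp 2 x‖ ^ 2 = ∑ a, x a ^ 2 := by
  simp [EuclideanSpace.norm_sq_eq]

theorem Orthonormal.norm_sq_sum_smul {ι E : Type*} [NormedAddCommGroup E] [InnerProductSpace ℝ E]
    {v : ι → E} (hv : Orthonormal ℝ v) (l : ι → ℝ) (s : Finset ι) :
    ‖∑ i ∈ s, l i • v i‖ ^ 2 = ∑ i ∈ s, l i ^ 2 := by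
  rw [← real_inner_self_eq_norm_sq, hv.inner_sum]
  simp [sq]

section
variable {ι n m : Type*}

theorem Matrix.toLp_sum_smul_vecMulVec_apply (U : ι → n → ℝ) (V : ι → m → ℝ) (σ : ι → ℝ)
    (s : Finset ι) (a : n) :
    toLp 2 ((∑ i ∈ s, σ i • vecMulVec (U i) (V i)) a) = ∑ i ∈ s, (σ i * U i a) • toLp 2 (V i) := by
  ext b
  simp [Matrix.sum_apply, vecMulVec_apply, mul_assoc]

theorem Matrix.sum_sq_sum_smul_vecMulVec [Fintype n] [Fintype m] {U : ι → n → ℝ} {V : ι → m → ℝ}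
    (hU : Orthonormal ℝ (fun i => toLp 2 (U i))) (hV : Orthonormal ℝ (fun i => toLp 2 (V i)))
    (σ : ι → ℝ) (s : Finset ι) :
    ∑ a, ∑ b, (∑ i ∈ s, σ i • vecMulVec (U i) (V i)) a b ^ 2 = ∑ i ∈ s, σ i ^ 2 := by
  calc ∑ a, ∑ b, (∑ i ∈ s, σ i • vecMulVec (U i) (V i)) a b ^ 2
      = ∑ a, ‖toLp 2 ((∑ i ∈ s, σ i • vecMulVec (U i) (V i)) a)‖ ^ 2 := by
        simp_rw [EuclideanSpace.norm_sq_toLp]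
    _ = ∑ a, ∑ i ∈ s, (σ i * U i a) ^ 2 := by
        simp_rw [toLp_sum_smul_vecMulVec_apply, hV.norm_sq_sum_smul]
    _ = ∑ i ∈ s, σ i ^ 2 * ‖toLp 2 (U i)‖ ^ 2 := by
        rw [sum_comm]
        simp only [EuclideanSpace.norm_sq_toLp, mul_sum, mul_pow]
    _ = ∑ i ∈ s, σ i ^ 2 := by simp [hU.norm_eq_one]

variable [Fintype m] [DecidableEq m]

theorem Matrix.rank_eq_finrank_range_toEuclideanLin [Fintype n] (B : Matrix n m ℝ) :
    B.rank = Module.finrank ℝ (LinearMap.range B.toEuclideanLin) :=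
  B.rank_eq_finrank_range_toLin (EuclideanSpace.basisFun n ℝ).toBasis
    (EuclideanSpace.basisFun m ℝ).toBasis

theorem Matrix.toEuclideanLin_apply_eq_inner (D : Matrix n m ℝ) (x : EuclideanSpace ℝ m) (a : n) :
    D.toEuclideanLin x a = inner ℝ x (toLp 2 (D a)) := by
  simp [toLpLin_apply, mulVec, EuclideanSpace.inner_eq_star_dotProduct]

theorem Matrix.sum_norm_sq_toEuclideanLin_le [Fintype n] {v : ι → EuclideanSpace ℝ m} [Fintype ι]
    (hv : Orthonormal ℝ v) (D : Matrix n m ℝ) :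
    ∑ i, ‖D.toEuclideanLin (v i)‖ ^ 2 ≤ ∑ a, ∑ b, D a b ^ 2 := by
  calc ∑ i, ‖D.toEuclideanLin (v i)‖ ^ 2 = ∑ a, ∑ i, ‖inner ℝ (v i) (toLp 2 (D a))‖ ^ 2 := by
        simp_rw [EuclideanSpace.norm_sq_eq, toEuclideanLin_apply_eq_inner]
        exact sum_comm
    _ ≤ ∑ a, ‖toLp 2 (D a)‖ ^ 2 := sum_le_sum fun a _ => hv.sum_inner_products_le _
    _ = ∑ a, ∑ b, D a b ^ 2 := by simp_rw [EuclideanSpace.norm_sq_toLp]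

theorem Matrix.toEuclideanLin_sum_smul_vecMulVec [Fintype ι] {V : ι → m → ℝ}
    (hV : Orthonormal ℝ (fun i => toLp 2 (V i))) (σ : ι → ℝ) (U : ι → n → ℝ) (j : ι) :
    (∑ i, σ i • vecMulVec (U i) (V i)).toEuclideanLin (toLp 2 (V j)) = σ j • toLp 2 (U j) := by
  ext a
  rw [toEuclideanLin_apply_eq_inner, toLp_sum_smul_vecMulVec_apply, hV.inner_right_fintype]
  simp
end

theorem eckart_young_frobenius_general
    {n m r : ℕ} (p : ℕ)
    (σ : Fin r → ℝ) (U : Fin r → Fin n → ℝ) (V : Fin r → Fin m → ℝ)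
    (hσpos : ∀ i, 0 < σ i)
    (hσmono : ∀ i j : Fin r, i ≤ j → σ j ≤ σ i)
    (hUorth : ∀ i j : Fin r, ∑ a : Fin n, U i a * U j a = if i = j then 1 else 0)
    (hVorth : ∀ i j : Fin r, ∑ a : Fin m, V i a * V j a = if i = j then 1 else 0)
    (X Xt : Matrix (Fin n) (Fin m) ℝ)
    (hX : X = ∑ i : Fin r, σ i • Matrix.vecMulVec (U i) (V i))
    (hXt : Xt = ∑ i ∈ Finset.univ.filter (fun i : Fin r => (i : ℕ) < p),
      σ i • Matrix.vecMulVec (U i) (V i)) :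
    ∀ B : Matrix (Fin n) (Fin m) ℝ, B.rank ≤ p →
      Real.sqrt (∑ a : Fin n, ∑ b : Fin m, (X a b - Xt a b) ^ 2)
        ≤ Real.sqrt (∑ a : Fin n, ∑ b : Fin m, (X a b - B a b) ^ 2) := by
  intro B hB
  have hU := EuclideanSpace.orthonormal_toLp_iff.2 hUorth
  have hV := EuclideanSpace.orthonormal_toLp_iff.2 hVorth
  set K := LinearMap.range B.toEuclideanLin
  set c : Fin r → ℝ := fun i => ‖K.starProjection (toLp 2 (U i))‖ ^ 2
  have hweights : ∑ i, σ i ^ 2 * c i ≤ ∑ i ∈ univ.filter (fun i : Fin r => (i : ℕ) < p), σ i ^ 2 :=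
    Antitone.sum_mul_le_sum_filter_val_lt p
      (fun i j hij => pow_le_pow_left₀ (hσpos j).le (hσmono i j hij) 2) (fun _ => sq_nonneg _)
      (fun _ => sq_nonneg _)
      (fun i => by simpa [c, hU.norm_eq_one] using K.norm_starProjection_apply_le (toLp 2 (U i)))
      ((hU.sum_norm_sq_starProjection_le_finrank K).trans
        (by rw [← rank_eq_finrank_range_toEuclideanLin]; exact_mod_cast hB))
  have hresidual (i : Fin r) :
      σ i ^ 2 * (1 - c i) ≤ ‖(X - B).toEuclideanLin (toLp 2 (V i))‖ ^ 2 := by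
    rw [map_sub, LinearMap.sub_apply, hX, toEuclideanLin_sum_smul_vecMulVec hV]
    exact K.sq_mul_one_sub_norm_sq_starProjection_le (hU.norm_eq_one i) (σ i)
      (LinearMap.mem_range_self _ _)
  apply Real.sqrt_le_sqrt
  calc ∑ a, ∑ b, (X a b - Xt a b) ^ 2
      = ∑ i ∈ univ.filter (fun i : Fin r => ¬ (i : ℕ) < p), σ i ^ 2 := by
        simp_rw [← Matrix.sub_apply]
        rw [hX, hXt, ← sum_filter_add_sum_filter_not univ (fun i : Fin r => (i : ℕ) < p),
          add_sub_cancel_left]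
        exact sum_sq_sum_smul_vecMulVec hU hV σ _
    _ ≤ ∑ i, σ i ^ 2 * (1 - c i) := by
        have := sum_filter_add_sum_filter_not univ (fun i : Fin r => (i : ℕ) < p) (σ · ^ 2)
        simp only [mul_sub, mul_one, sum_sub_distrib]
        linarith
    _ ≤ ∑ i, ‖(X - B).toEuclideanLin (toLp 2 (V i))‖ ^ 2 := sum_le_sum fun i _ => hresidual i
    _ ≤ ∑ a, ∑ b, (X a b - B a b) ^ 2 := sum_norm_sq_toEuclideanLin_le hV (X - B)

/-- Eckart–Young theorem in the Frobenius norm: the rank-`p` SVD truncation `X̃`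
of `X` minimizes the Frobenius distance to `X` among all matrices of rank at
most `p`. -/
theorem eckart_young_frobenius
    {n m r : ℕ} (p : ℕ) (hp : p ≤ r)
    (σ : Fin r → ℝ) (U : Fin r → Fin n → ℝ) (V : Fin r → Fin m → ℝ)
    (hσpos : ∀ i, 0 < σ i)
    (hσmono : ∀ i j : Fin r, i ≤ j → σ j ≤ σ i)
    (hUorth : ∀ i j : Fin r, ∑ a : Fin n, U i a * U j a = if i = j then 1 else 0)
    (hVorth : ∀ i j : Fin r, ∑ a : Fin m, V i a * V j a = if i = j then 1 else 0)
    (X Xt : Matrix (Fin n) (Fin m) ℝ)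
    (hX : X = ∑ i : Fin r, σ i • Matrix.vecMulVec (U i) (V i))
    (hXt : Xt = ∑ i ∈ Finset.univ.filter (fun i : Fin r => (i : ℕ) < p),
      σ i • Matrix.vecMulVec (U i) (V i)) :
    ∀ B : Matrix (Fin n) (Fin m) ℝ, B.rank ≤ p →
      Real.sqrt (∑ a : Fin n, ∑ b : Fin m, (X a b - Xt a b) ^ 2)
        ≤ Real.sqrt (∑ a : Fin n, ∑ b : Fin m, (X a b - B a b) ^ 2) :=
  eckart_young_frobenius_general p σ U V hσpos hσmono hUorth hVorth X Xt hX hXt
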